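/- Let H, K, W be complex Hilbert spaces, T : H → W a bounded linear map, and ξ ∈ K a nonzero vector. If (w_i)_{i ∈ I} is a family of vectors in W whose images in the quotient W / closure(range T) are linearly independent, then the images of the family (w_i ⊗ ξ)_{i ∈ I} in (W ⊗̂ K) / closure(range(T ⊗ id_K)) are linearly independent. -/
import Mathlib


open scoped InnerProductSpace

/-- A realization of the Hilbert space tensor product of two complex Hilbert spaces. -/
structure HilbertTensorProduct (H K T : Type*)
    [NormedAddCommGroup H] [InnerProductSpace ℂ H]
    [NormedAddCommGroup K] [InnerProductSpace ℂ K]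
    [NormedAddCommGroup T] [InnerProductSpace ℂ T] where
  tmul : H →ₗ[ℂ] K →ₗ[ℂ] T
  inner_tmul : ∀ (a c : H) (b d : K), ⟪tmul a b, tmul c d⟫_ℂ = ⟪a, c⟫_ℂ * ⟪b, d⟫_ℂ
  dense_span : Dense (↑(Submodule.span ℂ {x : T | ∃ a b, x = tmul a b}) : Set T)

theorem linearIndependent_in_quotient_tensor
    {H K W HK WK : Type*}
    [NormedAddCommGroup H] [InnerProductSpace ℂ H] [CompleteSpace H]
    [NormedAddCommGroup K] [InnerProductSpace ℂ K] [CompleteSpace K]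
    [NormedAddCommGroup W] [InnerProductSpace ℂ W] [CompleteSpace W]
    [NormedAddCommGroup HK] [InnerProductSpace ℂ HK] [CompleteSpace HK]
    [NormedAddCommGroup WK] [InnerProductSpace ℂ WK] [CompleteSpace WK]
    (tH : HilbertTensorProduct H K HK) (tW : HilbertTensorProduct W K WK)
    (T : H →L[ℂ] W) (Tk : HK →L[ℂ] WK)
    (hTk : ∀ (v : H) (η : K), Tk (tH.tmul v η) = tW.tmul (T v) η)
    (ξ : K) (hξ : ξ ≠ 0) {I : Type*} (w : I → W)
    (hw : LinearIndependent ℂ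
      (fun i => (LinearMap.range (T : H →ₗ[ℂ] W)).topologicalClosure.mkQ (w i))) :
    LinearIndependent ℂ
      (fun i => (LinearMap.range (Tk : HK →ₗ[ℂ] WK)).topologicalClosure.mkQ
        (tW.tmul (w i) ξ)) := by
  classical
  set M : Submodule ℂ W := (LinearMap.range (T : H →ₗ[ℂ] W)).topologicalClosure with hM
  set M' : Submodule ℂ WK := (LinearMap.range (Tk : HK →ₗ[ℂ] WK)).topologicalClosure with hM'
  rw [linearIndependent_iff] at hw ⊢
  intro l hl
  apply hw l
  rw [show (fun i => M'.mkQ (tW.tmul (w i) ξ)) = M'.mkQ ∘ (fun i => tW.tmul (w i) ξ) from rfl,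
    ← Finsupp.apply_linearCombination, Submodule.mkQ_apply, Submodule.Quotient.mk_eq_zero] at hl
  rw [show (fun i => M.mkQ (w i)) = M.mkQ ∘ w from rfl,
    ← Finsupp.apply_linearCombination, Submodule.mkQ_apply, Submodule.Quotient.mk_eq_zero]
  set y : WK := Finsupp.linearCombination ℂ (fun i => tW.tmul (w i) ξ) l with hy
  set wsum : W := Finsupp.linearCombination ℂ w l with hwsum
  -- goal : wsum ∈ M
  have hMo : M = (LinearMap.range (T : H →ₗ[ℂ] W))ᗮᗮ :=
    (Submodule.orthogonal_orthogonal_eq_closure _).symm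
  rw [hMo, Submodule.mem_orthogonal]
  intro z hz
  have hzT : ∀ v : H, ⟪z, T v⟫_ℂ = 0 := fun v =>
    (Submodule.mem_orthogonal' _ z).mp hz (T v) ⟨v, rfl⟩
  -- the functional x ↦ ⟪z ⊗ ξ, Tk x⟫ vanishes
  set g : HK →L[ℂ] ℂ := (innerSL ℂ (tW.tmul z ξ)).comp Tk with hg
  have hg0 : ∀ x : HK, g x = 0 := by
    have hker : Submodule.span ℂ {x : HK | ∃ a b, x = tH.tmul a b} ≤
        LinearMap.ker (g : HK →ₗ[ℂ] ℂ) := by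
      rw [Submodule.span_le]
      rintro x ⟨a, b, rfl⟩
      simp only [SetLike.mem_coe, LinearMap.mem_ker, ContinuousLinearMap.coe_coe,
        ContinuousLinearMap.comp_apply, innerSL_apply_apply, hg, hTk, tW.inner_tmul, hzT, zero_mul]
    have hcl : (Submodule.span ℂ {x : HK | ∃ a b, x = tH.tmul a b}).topologicalClosure ≤
        LinearMap.ker (g : HK →ₗ[ℂ] ℂ) :=
      Submodule.topologicalClosure_minimal _ hker (ContinuousLinearMap.isClosed_ker g)
    have htop : (Submodule.span ℂ {x : HK | ∃ a b, x = tH.tmul a b}).topologicalClosure = ⊤ :=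
      Submodule.dense_iff_topologicalClosure_eq_top.mp tH.dense_span
    intro x
    have : x ∈ LinearMap.ker (g : HK →ₗ[ℂ] ℂ) := hcl (htop ▸ Submodule.mem_top)
    exact this
  -- hence z ⊗ ξ ⊥ M'
  have hzy : ⟪tW.tmul z ξ, y⟫_ℂ = 0 := by
    have hmem : tW.tmul z ξ ∈ (LinearMap.range (Tk : HK →ₗ[ℂ] WK))ᗮ := by
      rw [Submodule.mem_orthogonal']
      rintro u ⟨x, rfl⟩
      exact hg0 x
    have hy' : y ∈ (LinearMap.range (Tk : HK →ₗ[ℂ] WK))ᗮᗮ := by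
      rw [Submodule.orthogonal_orthogonal_eq_closure]; exact hl
    exact (Submodule.mem_orthogonal _ y).mp hy' _ hmem
  -- compute the inner product
  have hcalc : ⟪tW.tmul z ξ, y⟫_ℂ = ⟪ξ, ξ⟫_ℂ * ⟪z, wsum⟫_ℂ := by
    have hfun : (innerSL ℂ (tW.tmul z ξ)).toLinearMap ∘ (fun i => tW.tmul (w i) ξ)
        = ((⟪ξ, ξ⟫_ℂ : ℂ) • (innerSL ℂ z).toLinearMap) ∘ w := by
      funext i
      simp only [Function.comp_apply, ContinuousLinearMap.coe_coe, innerSL_apply_apply,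
        LinearMap.smul_apply, smul_eq_mul, tW.inner_tmul]
      ring
    calc ⟪tW.tmul z ξ, y⟫_ℂ
        = (innerSL ℂ (tW.tmul z ξ)).toLinearMap y := rfl
      _ = Finsupp.linearCombination ℂ
            ((innerSL ℂ (tW.tmul z ξ)).toLinearMap ∘ fun i => tW.tmul (w i) ξ) l :=
          Finsupp.apply_linearCombination ℂ _ _ l
      _ = Finsupp.linearCombination ℂ (((⟪ξ, ξ⟫_ℂ : ℂ) • (innerSL ℂ z).toLinearMap) ∘ w) l := by
          rw [hfun]
      _ = ((⟪ξ, ξ⟫_ℂ : ℂ) • (innerSL ℂ z).toLinearMap) wsum :=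
          (Finsupp.apply_linearCombination ℂ _ w l).symm
      _ = ⟪ξ, ξ⟫_ℂ * ⟪z, wsum⟫_ℂ := by simp
  rw [hcalc] at hzy
  have hξξ : ⟪ξ, ξ⟫_ℂ ≠ 0 := fun h => hξ (inner_self_eq_zero.mp h)
  exact (mul_eq_zero.mp hzy).resolve_left hξξ
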